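/- arXiv:2510.24032 — 3 statements merged into one kernel-verified Lean document; each statement's English description precedes it below -/
import Mathlib

section
/- Let A be an n×n integer matrix with ⋂_{k=1}^∞ im A^k = 0. Then the transpose Aᵀ also satisfies ⋂_{k=1}^∞ im (Aᵀ)^k = 0. -/
/-!
Let `S = ⋂ₖ im fᵏ` for an endomorphism `f` of a finite free module over a PID. By Noetherianity
`f` is injective on `im f^N` for large `N`, which makes `f` restrict to an automorphism of `S`.
The characteristic polynomial `g` of `f|_S` then has a unit constant term, and `g(f)` kills `S`
by Cayley–Hamilton. Conversely, if `g(0)` is a unit then `Xᵏ` and `g` are coprime, so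
`ker g(f) ⊆ im fᵏ` for every `k`. Hence `S ≠ 0` iff `det g(A) = 0` for some `g` with unit
constant term, and this condition is invariant under transposition because `g(Aᵀ) = g(A)ᵀ`.
-/

open Polynomial

lemma Polynomial.isCoprime_X_of_isUnit_coeff_zero {R : Type*} [CommRing R] {g : R[X]}
    (hg : IsUnit (g.coeff 0)) : IsCoprime X g := by
  obtain ⟨u, hu⟩ := hg
  refine ⟨-(C (↑u⁻¹ : R) * g.divX), C (↑u⁻¹ : R), ?_⟩
  have hinv : C (↑u⁻¹ : R) * C (u : R) = 1 := by rw [← C_mul, Units.inv_mul, C_1]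
  have hsplit : X * g.divX + C (u : R) = g := hu ▸ X_mul_divX_add g
  linear_combination (-C (↑u⁻¹ : R)) * hsplit + hinv

namespace LinearMap

section Ring

variable {R M : Type*} [Ring R] [AddCommGroup M] [Module R M] (f : M →ₗ[R] M)

def stableRange : Submodule R M := ⨅ k, range (f ^ k)

lemma mem_stableRange {x : M} : x ∈ f.stableRange ↔ ∀ k, x ∈ range (f ^ k) :=
  Submodule.mem_iInf _

lemma stableRange_le_range_pow (k : ℕ) : f.stableRange ≤ range (f ^ k) :=
  iInf_le _ k

lemma stableRange_eq_iInf_range_pow_succ : f.stableRange = ⨅ k, range (f ^ (k + 1)) :=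
  (Antitone.iInf_nat_add (f := fun k ↦ range (f ^ k))
    (fun _ _ h ↦ f.iterateRange.monotone h) 1).symm

lemma apply_mem_stableRange : ∀ x ∈ f.stableRange, f x ∈ f.stableRange := by
  intro x hx
  refine f.mem_stableRange.2 fun k ↦ ?_
  obtain ⟨y, rfl⟩ := f.mem_stableRange.1 hx k
  exact ⟨f y, by rw [← Module.End.mul_apply, ← pow_succ, pow_succ', Module.End.mul_apply]⟩

variable [IsNoetherian R M]

lemma eventually_injOn_range_pow : ∀ᶠ N in Filter.atTop, Set.InjOn f (range (f ^ N)) := by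
  filter_upwards [Module.End.eventually_disjoint_ker_pow_range_pow f,
    Filter.eventually_ge_atTop 1] with N hN hN1 u hu v hv huv
  have hker : u - v ∈ ker (f ^ N) := f.iterateKer.monotone hN1 (by simp [huv])
  exact sub_eq_zero.1 (Submodule.disjoint_def.1 hN _ hker (sub_mem hu hv))

lemma injOn_stableRange : Set.InjOn f f.stableRange := by
  obtain ⟨N, hN⟩ := f.eventually_injOn_range_pow.exists
  exact hN.mono (f.stableRange_le_range_pow N)

lemma surjOn_stableRange : Set.SurjOn f f.stableRange f.stableRange := by
  intro x hx
  choose y hy using fun k ↦ f.mem_stableRange.1 hx (k + 1)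
  obtain ⟨N, hN⟩ := Filter.eventually_atTop.1 f.eventually_injOn_range_pow
  have hfy (k : ℕ) : f ((f ^ k) (y k)) = x := by
    rw [← Module.End.mul_apply, ← pow_succ', hy]
  -- the preimages `f^k (y k)` with `k ≥ N` all lie in `range f^N`, where `f` is injective
  have hyN (k : ℕ) (hk : N ≤ k) : (f ^ N) (y N) = (f ^ k) (y k) :=
    hN N le_rfl ⟨y N, rfl⟩ (f.iterateRange.monotone hk ⟨y k, rfl⟩) ((hfy N).trans (hfy k).symm)
  refine ⟨(f ^ N) (y N), f.mem_stableRange.2 fun k ↦ ?_, hfy N⟩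
  rw [hyN (max k N) (le_max_right k N)]
  exact f.iterateRange.monotone (le_max_left k N) ⟨y _, rfl⟩

lemma bijective_restrict_stableRange :
    Function.Bijective (f.restrict f.apply_mem_stableRange) := by
  refine ⟨fun u v huv ↦ Subtype.ext (f.injOn_stableRange u.2 v.2 (congrArg Subtype.val huv)), ?_⟩
  rintro ⟨x, hx⟩
  obtain ⟨y, hy, rfl⟩ := f.surjOn_stableRange hx
  exact ⟨⟨y, hy⟩, rfl⟩

end Ring

section CommRing

variable {R M : Type*} [CommRing R] [AddCommGroup M] [Module R M] (f : M →ₗ[R] M)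

lemma ker_aeval_le_stableRange {g : R[X]} (hg : IsCoprime X g) :
    ker (aeval f g) ≤ f.stableRange := by
  intro v hv
  refine f.mem_stableRange.2 fun k ↦ ?_
  obtain ⟨a, b, hab⟩ := hg.pow_left (m := k)
  refine ⟨aeval f a v, ?_⟩
  calc (f ^ k) (aeval f a v) = aeval f (X ^ k * a + b * g) v := by simp [mem_ker.1 hv]
    _ = v := by rw [mul_comm (X ^ k), hab, map_one, Module.End.one_apply]

lemma aeval_restrict_apply {p : Submodule R M} (h : ∀ x ∈ p, f x ∈ p) (g : R[X]) (x : p) :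
    (aeval (f.restrict h) g x : M) = aeval f g x := by
  induction g using Polynomial.induction_on' with
  | add p q hp hq => simp [hp, hq]
  | monomial k a =>
    rw [aeval_monomial, aeval_monomial, Module.End.pow_restrict]
    rfl

lemma isUnit_charpoly_coeff_zero_of_bijective [Module.Free R M] [Module.Finite R M]
    (hf : Function.Bijective f) : IsUnit (f.charpoly.coeff 0) := by
  have hdet : IsUnit (LinearMap.det f) := (LinearEquiv.ofBijective f hf).isUnit_det'
  rw [det_eq_sign_charpoly_coeff] at hdet
  exact isUnit_of_mul_isUnit_right hdet

end CommRing

section PrincipalIdealRing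

variable {R M : Type*} [CommRing R] [IsDomain R] [IsPrincipalIdealRing R] [AddCommGroup M]
  [Module R M] [Module.Free R M] [Module.Finite R M] (f : M →ₗ[R] M)

lemma exists_isCoprime_X_stableRange_le_ker_aeval :
    ∃ g : R[X], IsCoprime X g ∧ f.stableRange ≤ ker (aeval f g) := by
  set φ := f.restrict f.apply_mem_stableRange
  refine ⟨φ.charpoly, isCoprime_X_of_isUnit_coeff_zero
    (φ.isUnit_charpoly_coeff_zero_of_bijective f.bijective_restrict_stableRange), fun x hx ↦ ?_⟩
  rw [mem_ker, ← f.aeval_restrict_apply f.apply_mem_stableRange _ ⟨x, hx⟩,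
    aeval_self_charpoly, zero_apply, Submodule.coe_zero]

lemma stableRange_ne_bot_iff :
    f.stableRange ≠ ⊥ ↔ ∃ g : R[X], IsCoprime X g ∧ ker (aeval f g) ≠ ⊥ := by
  constructor
  · intro h
    obtain ⟨g, hg, hle⟩ := f.exists_isCoprime_X_stableRange_le_ker_aeval
    exact ⟨g, hg, ne_bot_of_le_ne_bot h hle⟩
  · rintro ⟨g, hg, h⟩
    exact ne_bot_of_le_ne_bot h (f.ker_aeval_le_stableRange hg)

end PrincipalIdealRing

end LinearMap

namespace Matrix

variable {n R : Type*} [Fintype n] [DecidableEq n] [CommRing R]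

lemma iInter_range_pow_succ_mulVec (B : Matrix n n R) :
    ⋂ k : ℕ, Set.range (B ^ (k + 1)).mulVec = (toLinAlgEquiv' B).stableRange := by
  simp only [LinearMap.stableRange_eq_iInf_range_pow_succ, ← map_pow, Submodule.coe_iInf]
  rfl

lemma aeval_transpose (B : Matrix n n R) (g : R[X]) : aeval Bᵀ g = (aeval B g)ᵀ := by
  simp only [aeval_eq_sum_range, transpose_sum, transpose_smul, transpose_pow]

lemma ker_toLinAlgEquiv'_ne_bot_iff [IsDomain R] {C : Matrix n n R} :
    LinearMap.ker (toLinAlgEquiv' C) ≠ ⊥ ↔ C.det = 0 := by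
  rw [Submodule.ne_bot_iff, ← exists_mulVec_eq_zero_iff]
  simp [and_comm]

lemma stableRange_toLinAlgEquiv'_ne_bot_iff [IsDomain R] [IsPrincipalIdealRing R]
    (B : Matrix n n R) :
    (toLinAlgEquiv' B).stableRange ≠ ⊥ ↔ ∃ g : R[X], IsCoprime X g ∧ (aeval B g).det = 0 := by
  simp only [LinearMap.stableRange_ne_bot_iff, ← ker_toLinAlgEquiv'_ne_bot_iff, aeval_algHom_apply]

lemma stableRange_toLinAlgEquiv'_transpose_eq_bot_iff [IsDomain R] [IsPrincipalIdealRing R]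
    (B : Matrix n n R) :
    (toLinAlgEquiv' Bᵀ).stableRange = ⊥ ↔ (toLinAlgEquiv' B).stableRange = ⊥ := by
  refine not_iff_not.1 ?_
  simp only [← ne_eq, stableRange_toLinAlgEquiv'_ne_bot_iff, aeval_transpose, det_transpose]

end Matrix

/-- **Corollary.** If an `n×n` integer matrix `A` satisfies `⋂_{k≥1} im Aᵏ = 0`, then so does
its transpose: `⋂_{k≥1} im (Aᵀ)ᵏ = 0`. -/
theorem inter_range_pow_transpose_eq_bot
    (n : ℕ) (A : Matrix (Fin n) (Fin n) ℤ)
    (hA : (⋂ k : ℕ, Set.range ((A ^ (k + 1)).mulVec)) = {0}) :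
    (⋂ k : ℕ, Set.range ((A.transpose ^ (k + 1)).mulVec)) = {0} := by
  rw [Matrix.iInter_range_pow_succ_mulVec, ← Submodule.bot_coe (R := ℤ), SetLike.coe_set_eq]
    at hA ⊢
  rwa [Matrix.stableRange_toLinAlgEquiv'_transpose_eq_bot_iff]
end

section
/- Let θ : BS(2,3) → BS(2,3) be the unique group homomorphism with θ(a) = a⁻⁵ and θ(t) = t, let φ : BS(2,3) → Q(2,3) be the unique group homomorphism with φ(a) = (1,0) and φ(t) = (0,1), and let f : Q(2,3) → Q(2,3) be the endomorphism f(x, y) = (−5x, y). Then φ ∘ θ = f ∘ φ; for every integer k ≥ 1, φ(im θ^k) = im f^k; and ker φ ⊆ ⋂_{k=1}^∞ im θ^k. -/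
open Multiplicative

/-- `ℤ[1/6]` as an additive subgroup of `ℚ`. -/
def Z16 : AddSubgroup ℚ where
  carrier := {q : ℚ | ∃ (m : ℤ) (k : ℕ), q = m / 6 ^ k}
  zero_mem' := ⟨0, 0, by norm_num⟩
  add_mem' := by
    rintro a b ⟨m, k, rfl⟩ ⟨m', k', rfl⟩
    refine ⟨m * 6 ^ k' + m' * 6 ^ k, k + k', ?_⟩
    push_cast
    rw [pow_add]
    field_simp
  neg_mem' := by
    rintro a ⟨m, k, rfl⟩
    exact ⟨-m, k, by push_cast; ring⟩

/-- Multiplication by `3/2` as an additive automorphism of `ℤ[1/6]`. -/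
def mul32 : Z16 ≃+ Z16 where
  toFun q := ⟨(3 / 2 : ℚ) * q, by
    obtain ⟨m, k, hq⟩ := q.2
    refine ⟨9 * m, k + 1, ?_⟩
    rw [hq]; push_cast; rw [pow_succ]; field_simp; ring⟩
  invFun q := ⟨(2 / 3 : ℚ) * q, by
    obtain ⟨m, k, hq⟩ := q.2
    refine ⟨4 * m, k + 1, ?_⟩
    rw [hq]; push_cast; rw [pow_succ]; field_simp; ring⟩
  left_inv q := Subtype.ext (by
    show (2 / 3 : ℚ) * ((3 / 2 : ℚ) * (q : ℚ)) = (q : ℚ)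
    ring)
  right_inv q := Subtype.ext (by
    show (3 / 2 : ℚ) * ((2 / 3 : ℚ) * (q : ℚ)) = (q : ℚ)
    ring)
  map_add' a b := Subtype.ext (by push_cast; ring)

/-- The action of `ℤ` on `ℤ[1/6]` in which `1` acts by multiplication by `3/2`. -/
def phiQ : Multiplicative ℤ →* MulAut (Multiplicative Z16) :=
  zpowersHom (MulAut (Multiplicative Z16)) (AddEquiv.toMultiplicative mul32)

/-- The group `Q(2,3) = ℤ[1/6] ⋊ ℤ`, where the generator `1 ∈ ℤ` acts on `ℤ[1/6]` by
multiplication by `3/2`. -/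
abbrev Q23 : Type := SemidirectProduct (Multiplicative Z16) (Multiplicative ℤ) phiQ

/-- The element `(1, 0)` of `Q(2,3)`. -/
def Qa : Q23 := SemidirectProduct.inl (ofAdd (⟨1, 1, 0, by norm_num⟩ : Z16))

/-- The element `(0, 1)` of `Q(2,3)`. -/
def Qt : Q23 := SemidirectProduct.inr (ofAdd (1 : ℤ))

/-- The single relator `t a² t⁻¹ a⁻³` of the Baumslag–Solitar group `BS(2,3)`,
with generator `0` playing the role of `a` and generator `1` the role of `t`. -/
def BSrels : Set (FreeGroup (Fin 2)) :=
  {FreeGroup.of 1 * FreeGroup.of 0 ^ 2 * (FreeGroup.of 1)⁻¹ * (FreeGroup.of 0 ^ 3)⁻¹}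

/-- The Baumslag–Solitar group `BS(2,3) = ⟨a, t ∣ t a² t⁻¹ = a³⟩`. -/
abbrev BS23 : Type := PresentedGroup BSrels

/-- The generator `a` of `BS(2,3)`. -/
def BSa : BS23 := PresentedGroup.of 0

/-- The generator `t` of `BS(2,3)`. -/
def BSt : BS23 := PresentedGroup.of 1

/-- The `k`-th iterate of a group endomorphism. -/
def iterHom {G : Type*} [Group G] (f : G →* G) : ℕ → (G →* G)
  | 0 => MonoidHom.id G
  | k + 1 => (iterHom f k).comp f


/-! The square commutes because both composites agree on `a` and `t`, and `φ` is onto: the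
`ℤ[1/6]`-line of `Q(2,3)` generated by `(1,0)` is stable under conjugation by `(0,1)^{±1}`, i.e.
under `× 3/2` and `× 2/3`, hence under `× 1/6 = 3/2 - 2 · 2/3`. Then
`φ(im θᵏ) = fᵏ(φ(BS(2,3))) = im fᵏ`.

For the kernel, `H = im θᵏ` contains `t` and `a^{5ᵏ}`. Since `t a^{2m} = a^{3m} t` and both `2` and
`3` are units modulo `5ᵏ`, powers of `a` can be pushed to the left past `t^{±1}` at the cost of
an element of `H`, so every `g` is `a^i h` with `h ∈ H`. If `φ(g) = 1`, then
`φ(a)^{-i} = φ(h) ∈ im fᵏ = 5ᵏℤ[1/6] ⋊ ℤ`, which forces `5ᵏ ∣ i`; so `a^i ∈ H` and `g ∈ H`. -/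

section Group

variable {G : Type*} [Group G]

theorem exists_zpow_mul_mem_of_conj_zpow {a t : G} {p q N : ℤ}
    (hrel : t * a ^ p * t⁻¹ = a ^ q) (hp : IsCoprime p N) (hq : IsCoprime q N)
    (hgen : Subgroup.closure {a, t} = ⊤) {H : Subgroup G} (ht : t ∈ H) (haN : a ^ N ∈ H)
    (g : G) : ∃ i : ℤ, a ^ i * g ∈ H := by
  have hconj (m : ℤ) : t * a ^ (p * m) * t⁻¹ = a ^ (q * m) := by
    rw [zpow_mul, zpow_mul, ← conj_zpow, hrel]
  have hsplit {r : ℤ} (hr : IsCoprime r N) (i : ℤ) :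
      ∃ m n : ℤ, a ^ i = (a ^ N) ^ n * (a ^ (r * m))⁻¹ := by
    obtain ⟨u, v, huv⟩ := hr
    refine ⟨-(i * u), i * v, ?_⟩
    rw [← zpow_mul, ← zpow_neg, ← zpow_add]
    congr 1
    linear_combination (-i) * huv
  induction (hgen ▸ Subgroup.mem_top g : g ∈ Subgroup.closure {a, t}) using
    Subgroup.closure_induction_left with
  | one => exact ⟨0, by simp⟩
  | mul_left x hx y _ ih =>
    obtain ⟨i, hi⟩ := ih
    rcases hx with rfl | rfl
    · exact ⟨i - 1, by rwa [← mul_assoc, ← zpow_add_one, sub_add_cancel]⟩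
    · obtain ⟨m, n, hmn⟩ := hsplit hp i
      refine ⟨-(q * m), ?_⟩
      have : a ^ (-(q * m)) * (x * y) = x * (a ^ N) ^ (-n) * (a ^ i * y) := by
        rw [hmn, zpow_neg a, ← hconj]
        group
      rw [this]
      exact H.mul_mem (H.mul_mem ht (H.zpow_mem haN _)) hi
  | inv_mul_cancel x hx y _ ih =>
    obtain ⟨i, hi⟩ := ih
    rcases hx with rfl | rfl
    · exact ⟨i + 1, by rwa [← mul_assoc, zpow_add_one, mul_inv_cancel_right]⟩
    · obtain ⟨m, n, hmn⟩ := hsplit hq i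
      refine ⟨-(p * m), ?_⟩
      have : a ^ (-(p * m)) * (x⁻¹ * y) = x⁻¹ * (a ^ N) ^ (-n) * (a ^ i * y) := by
        rw [hmn, ← hconj]
        group
      rw [this]
      exact H.mul_mem (H.mul_mem (H.inv_mem ht) (H.zpow_mem haN _)) hi

theorem MonoidHom.ker_le_of_forall_exists_zpow_mul_mem {Q : Type*} [Group Q] (φ : G →* Q)
    {a : G} {H : Subgroup G} {M : Subgroup Q} (hHM : H.map φ ≤ M)
    (hcover : ∀ g, ∃ i : ℤ, a ^ i * g ∈ H) (ha : ∀ i : ℤ, φ a ^ i ∈ M → a ^ i ∈ H) :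
    φ.ker ≤ H := by
  intro g hg
  obtain ⟨i, hi⟩ := hcover g
  have hai : a ^ i ∈ H := ha i (by
    simpa [φ.mem_ker.mp hg] using hHM (Subgroup.mem_map_of_mem φ hi))
  simpa using H.mul_mem (H.inv_mem hai) hi

theorem iterHom_apply_of_apply_eq_zpow {f : G →* G} {a : G} {n : ℤ} (h : f a = a ^ n)
    (k : ℕ) : iterHom f k a = a ^ n ^ k := by
  induction k with
  | zero => simp [iterHom]
  | succ k ih =>
    change iterHom f k (f a) = _
    rw [h, map_zpow, ih, ← zpow_mul, pow_succ]

theorem iterHom_apply_of_apply_eq_self {f : G →* G} {a : G} (h : f a = a) (k : ℕ) :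
    iterHom f k a = a := by
  simpa using iterHom_apply_of_apply_eq_zpow (n := 1) (by simpa using h) k

theorem comp_iterHom_of_comp_eq {Q : Type*} [Group Q] {φ : G →* Q} {θ : G →* G}
    {f : Q →* Q} (h : φ.comp θ = f.comp φ) (k : ℕ) :
    φ.comp (iterHom θ k) = (iterHom f k).comp φ := by
  induction k with
  | zero => rfl
  | succ k ih =>
    simp only [iterHom]
    rw [← MonoidHom.comp_assoc, ih, MonoidHom.comp_assoc, h, MonoidHom.comp_assoc]

theorem map_range_iterHom_of_comp_eq {Q : Type*} [Group Q] {φ : G →* Q}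
    (hφ : Function.Surjective φ) {θ : G →* G} {f : Q →* Q} (h : φ.comp θ = f.comp φ) (k : ℕ) :
    (iterHom θ k).range.map φ = (iterHom f k).range := by
  rw [MonoidHom.map_range, comp_iterHom_of_comp_eq h, MonoidHom.range_comp,
    MonoidHom.range_eq_top.mpr hφ, ← MonoidHom.range_eq_map]

end Group

def Z16.one : Z16 := ⟨1, 1, 0, by norm_num⟩

theorem Z16.dvd_of_intCast_eq_mul {N i : ℤ} (hN : IsCoprime N 6) {x : Z16}
    (h : (i : ℚ) = N * x) : N ∣ i := by
  obtain ⟨m, n, hx⟩ := x.2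
  have : i * 6 ^ n = N * m := by
    rw [hx] at h
    field_simp at h
    exact_mod_cast h
  exact (hN.pow_right (n := n)).dvd_of_dvd_mul_right ⟨m, this⟩

theorem Z16.eq_top_of_one_mem_of_mul32_mem (L : AddSubgroup Z16) (h1 : Z16.one ∈ L)
    (h32 : ∀ x ∈ L, mul32 x ∈ L) (h23 : ∀ x ∈ L, mul32.symm x ∈ L) : L = ⊤ := by
  have hdiv : ∀ x ∈ L, ∀ hx : (x : ℚ) / 6 ∈ Z16, (⟨x / 6, hx⟩ : Z16) ∈ L := by
    intro x hxL hx
    have : (⟨x / 6, hx⟩ : Z16) = mul32 x - 2 • mul32.symm x := by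
      ext
      simp [mul32]
      ring
    rw [this]
    exact L.sub_mem (h32 x hxL) (L.nsmul_mem (h23 x hxL) 2)
  rw [eq_top_iff]
  rintro ⟨_, m, n, rfl⟩ -
  induction n with
  | zero =>
    have : (⟨(m : ℚ) / 6 ^ 0, m, 0, rfl⟩ : Z16) = m • Z16.one := by
      ext
      simp [Z16.one]
    rw [this]
    exact L.zsmul_mem h1 m
  | succ n ih =>
    simpa [pow_succ, div_div] using hdiv _ ih ⟨m, n + 1, by simp [pow_succ, div_div]⟩

namespace Q23

open SemidirectProduct

theorem Qa_zpow (i : ℤ) : Qa ^ i = inl (ofAdd (i • Z16.one)) := by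
  rw [Qa, ← map_zpow, ofAdd_zsmul]
  rfl

theorem Qt_zpow (y : ℤ) : Qt ^ y = inr (ofAdd y) := by
  rw [Qt, ← map_zpow, ← ofAdd_zsmul, smul_eq_mul, mul_one]

theorem inl_mul32 (x : Z16) : (inl (ofAdd (mul32 x)) : Q23) = Qt * inl (ofAdd x) * Qt⁻¹ := by
  rw [Qt, ← map_inv, ← inl_aut]
  simp [phiQ]

theorem inl_mul32_symm (x : Z16) :
    (inl (ofAdd (mul32.symm x)) : Q23) = Qt⁻¹ * inl (ofAdd x) * Qt := by
  rw [Qt, ← map_inv, ← inl_aut_inv]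
  simp [phiQ]

theorem closure_Qa_Qt : Subgroup.closure {Qa, Qt} = (⊤ : Subgroup Q23) := by
  set C := Subgroup.closure ({Qa, Qt} : Set Q23)
  have hQa : Qa ∈ C := Subgroup.subset_closure (by simp)
  have hQt : Qt ∈ C := Subgroup.subset_closure (by simp)
  have hinl : (C.comap inl).toAddSubgroup' = ⊤ := by
    refine Z16.eq_top_of_one_mem_of_mul32_mem _ hQa (fun x hx => ?_) (fun x hx => ?_)
    all_goals rw [Subgroup.mem_toAddSubgroup', Subgroup.mem_comap] at hx ⊢
    · rw [inl_mul32]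
      exact C.mul_mem (C.mul_mem hQt hx) (C.inv_mem hQt)
    · rw [inl_mul32_symm]
      exact C.mul_mem (C.mul_mem (C.inv_mem hQt) hx) hQt
  rw [eq_top_iff]
  intro g _
  rw [← inl_left_mul_inr_right g, ← ofAdd_toAdd g.right, ← Qt_zpow]
  refine C.mul_mem ?_ (C.zpow_mem hQt _)
  simpa using (hinl ▸ AddSubgroup.mem_top (toAdd g.left) :)

theorem iterHom_apply_mk_of_forall {f : Q23 →* Q23} {n : ℤ}
    (hf : ∀ (x : Z16) (y : ℤ), f ⟨ofAdd x, ofAdd y⟩ = ⟨ofAdd (n • x), ofAdd y⟩)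
    (k : ℕ) (x : Z16) (y : ℤ) :
    iterHom f k ⟨ofAdd x, ofAdd y⟩ = ⟨ofAdd (n ^ k • x), ofAdd y⟩ := by
  induction k generalizing x with
  | zero => simp [iterHom]
  | succ k ih =>
    change iterHom f k (f _) = _
    rw [hf, ih, smul_smul, pow_succ]

theorem dvd_of_Qa_zpow_mem_range {f : Q23 →* Q23} {n : ℤ} (hn : IsCoprime n 6)
    (hf : ∀ (x : Z16) (y : ℤ), f ⟨ofAdd x, ofAdd y⟩ = ⟨ofAdd (n • x), ofAdd y⟩)
    {k : ℕ} {i : ℤ} (hi : Qa ^ i ∈ (iterHom f k).range) : n ^ k ∣ i := by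
  obtain ⟨⟨x, y⟩, hxy⟩ := hi
  rw [← ofAdd_toAdd x, ← ofAdd_toAdd y, iterHom_apply_mk_of_forall hf, Qa_zpow] at hxy
  have := congrArg (fun g : Q23 => ((toAdd g.left : Z16) : ℚ)) hxy
  simp only [left_inl, toAdd_ofAdd, AddSubgroup.coe_zsmul, zsmul_eq_mul] at this
  exact Z16.dvd_of_intCast_eq_mul hn.pow_left (x := toAdd x) (by simpa [Z16.one] using this.symm)

end Q23

namespace BS23

theorem closure_BSa_BSt : Subgroup.closure {BSa, BSt} = (⊤ : Subgroup BS23) := by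
  rw [← PresentedGroup.closure_range_of]
  congr
  ext g
  simp [BSa, BSt, Fin.exists_fin_two, eq_comm]

theorem BSt_mul_BSa_sq_mul_BSt_inv : BSt * BSa ^ (2 : ℤ) * BSt⁻¹ = BSa ^ (3 : ℤ) := by
  have := PresentedGroup.one_of_mem (rels := BSrels) rfl
  simp only [map_mul, map_inv, map_pow, mul_inv_eq_one] at this
  exact_mod_cast this

end BS23

/-- **Lemma.** With `θ : BS(2,3) → BS(2,3)` the homomorphism determined by `θ(a) = a⁻⁵`,
`θ(t) = t`, `φ : BS(2,3) → Q(2,3)` the homomorphism determined by `φ(a) = (1,0)`,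
`φ(t) = (0,1)`, and `f : Q(2,3) → Q(2,3)` given by `f(x,y) = (−5x, y)`, the square
`φ ∘ θ = f ∘ φ` commutes, `φ(im θᵏ) = im fᵏ` for all `k ≥ 1`, and
`ker φ ⊆ ⋂_{k≥1} im θᵏ`. -/
theorem BS23_Q23_commuting_square
    (θ : BS23 →* BS23) (hθa : θ BSa = BSa ^ (-5 : ℤ)) (hθt : θ BSt = BSt)
    (φ : BS23 →* Q23) (hφa : φ BSa = Qa) (hφt : φ BSt = Qt)
    (f : Q23 →* Q23)
    (hf : ∀ (x : Z16) (y : ℤ), f ⟨ofAdd x, ofAdd y⟩ = ⟨ofAdd ((-5 : ℤ) • x), ofAdd y⟩) :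
    φ.comp θ = f.comp φ ∧
      (∀ k : ℕ, 1 ≤ k →
        Subgroup.map φ (iterHom θ k).range = (iterHom f k).range) ∧
      φ.ker ≤ ⨅ k : ℕ, (iterHom θ (k + 1)).range := by
  have hfQa : f Qa = Qa ^ (-5 : ℤ) := by
    rw [Q23.Qa_zpow]
    exact hf Z16.one 0
  have hfQt : f Qt = Qt := (hf 0 1).trans (by rw [smul_zero]; rfl)
  have hsquare : φ.comp θ = f.comp φ := MonoidHom.eq_of_eqOn_dense BS23.closure_BSa_BSt (by
    rintro _ (rfl | rfl) <;> simp [hθa, hθt, hφa, hφt, hfQa, hfQt])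
  have hsurj : Function.Surjective φ := MonoidHom.range_eq_top.mp (by
    rw [MonoidHom.range_eq_map, ← BS23.closure_BSa_BSt, MonoidHom.map_closure, Set.image_pair,
      hφa, hφt, Q23.closure_Qa_Qt])
  have hrange := map_range_iterHom_of_comp_eq hsurj hsquare
  refine ⟨hsquare, fun k _ => hrange k, le_iInf fun k => ?_⟩
  set H := (iterHom θ (k + 1)).range
  have haN : BSa ^ (-5 : ℤ) ^ (k + 1) ∈ H := ⟨BSa, iterHom_apply_of_apply_eq_zpow hθa _⟩
  have ht : BSt ∈ H := ⟨BSt, iterHom_apply_of_apply_eq_self hθt _⟩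
  have hcover := exists_zpow_mul_mem_of_conj_zpow BS23.BSt_mul_BSa_sq_mul_BSt_inv
    (by norm_num : IsCoprime (2 : ℤ) (-5)).pow_right
    (by norm_num : IsCoprime (3 : ℤ) (-5)).pow_right
    BS23.closure_BSa_BSt ht haN
  refine φ.ker_le_of_forall_exists_zpow_mul_mem (hrange _).le hcover fun i hi => ?_
  rw [hφa] at hi
  obtain ⟨j, rfl⟩ := Q23.dvd_of_Qa_zpow_mem_range (by norm_num) hf hi
  rw [zpow_mul]
  exact H.zpow_mem haN j
end

section
/- Let θ : BS(2,3) → BS(2,3) be the unique group homomorphism with θ(a) = a⁻⁵ and θ(t) = t, and let φ : BS(2,3) → Q(2,3) be the unique group homomorphism with φ(a) = (1,0) and φ(t) = (0,1). Then ⋂_{k=1}^∞ im θ^k = φ^{-1}(0 ⋊ ℤ), the preimage under φ of the subgroup {(0, y) : y ∈ ℤ} of Q(2,3), and this subgroup ⋂_{k=1}^∞ im θ^k is not a normal subgroup of BS(2,3). -/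
open Multiplicative

/-! With `ψ (x, y) = (-5x, y)` on `Q(2,3)` one has `φ ∘ θ = ψ ∘ φ`, so `φ (im θᵏ)` has first
coordinates in `5ᵏ ℤ[1/6]`, and these intersect in `0`. Conversely, the cosets `aⁱ ⟨a⁵, t⟩` cover
`BS(2,3)` and `φ (aⁱ) ∈ im ψ` forces `5 ∣ i`, so `ker φ ≤ im θ`; as `ψ` is injective, `θ` then maps
`ker φ` onto itself, so `ker φ ≤ im θᵏ` for all `k`, and with `θᵏ t = t` this gives
`φ⁻¹ (0 ⋊ ℤ) = ⟨t⟩ ⊔ ker φ ≤ im θᵏ`. The subgroup is not normal: it contains `t` but not `a t a⁻¹`,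
since `φ (a t a⁻¹) = (-1/2, 1)`. -/

open Function

section iterHom

variable {G Q : Type*} [Group G] [Group Q]

theorem coe_iterHom (f : G →* G) (k : ℕ) : ⇑(iterHom f k) = (⇑f)^[k] := by
  induction k with
  | zero => rfl
  | succ k ih => rw [iterate_succ, ← ih]; rfl

theorem mem_range_iterHom_succ {f : G →* G} {k : ℕ} {x : G} (hx : x ∈ (iterHom f k).range) :
    f x ∈ (iterHom f (k + 1)).range := by
  obtain ⟨y, rfl⟩ := hx
  exact ⟨y, by rw [coe_iterHom, coe_iterHom, iterate_succ_apply']⟩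

theorem range_iterHom_succ_le (f : G →* G) (k : ℕ) :
    (iterHom f (k + 1)).range ≤ (iterHom f k).range := by
  rintro _ ⟨x, rfl⟩
  exact ⟨f x, rfl⟩

theorem map_mem_range_iterHom {θ : G →* G} {φ : G →* Q} {ψ : Q →* Q} (hcomm : Semiconj φ θ ψ)
    {k : ℕ} {x : G} (hx : x ∈ (iterHom θ k).range) : φ x ∈ (iterHom ψ k).range := by
  obtain ⟨y, rfl⟩ := hx
  exact ⟨φ y, by rw [coe_iterHom, coe_iterHom, (hcomm.iterate_right k).eq]⟩

theorem ker_le_range_iterHom {θ : G →* G} {φ : G →* Q} {ψ : Q →* Q} (hψ : Injective ψ)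
    (hcomm : Semiconj φ θ ψ) (hker : φ.ker ≤ θ.range) (k : ℕ) :
    φ.ker ≤ (iterHom θ k).range := by
  induction k with
  | zero => exact fun x _ => ⟨x, rfl⟩
  | succ k ih =>
    intro x hx
    obtain ⟨y, rfl⟩ := hker hx
    have hy : φ y = 1 := hψ (by rw [← hcomm.eq, hx, map_one])
    exact mem_range_iterHom_succ (ih hy)

end iterHom

namespace SemidirectProduct

variable {N G : Type*} [CommGroup N] [Group G] {φ : G →* MulAut N}

def zpowLeft (n : ℤ) : N ⋊[φ] G →* N ⋊[φ] G :=
  map (zpowGroupHom n) (MonoidHom.id G) fun g => MonoidHom.ext fun x => (map_zpow (φ g) x n).symm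

@[simp]
theorem zpowLeft_left (n : ℤ) (x : N ⋊[φ] G) : (zpowLeft n x).left = x.left ^ n := rfl

@[simp]
theorem zpowLeft_right (n : ℤ) (x : N ⋊[φ] G) : (zpowLeft n x).right = x.right := rfl

theorem zpowLeft_inl (n : ℤ) (x : N) : zpowLeft n (inl x : N ⋊[φ] G) = inl x ^ n :=
  (map_inl _ _ _ x).trans (map_zpow inl x n)

theorem zpowLeft_inr (n : ℤ) (g : G) : zpowLeft n (inr g : N ⋊[φ] G) = inr g := by
  ext <;> simp

theorem zpowLeft_injective {n : ℤ} (hn : Injective fun x : N => x ^ n) :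
    Injective (zpowLeft n : N ⋊[φ] G → N ⋊[φ] G) := fun x y h => by
  ext
  · exact hn (by simpa using congrArg left h)
  · simpa using congrArg right h

theorem iterate_zpowLeft_left (n : ℤ) (k : ℕ) (x : N ⋊[φ] G) :
    ((zpowLeft n)^[k] x).left = x.left ^ n ^ k := by
  induction k with
  | zero => simp
  | succ k ih => rw [iterate_succ_apply', zpowLeft_left, ih, ← zpow_mul, pow_succ]

theorem mem_range_inr_iff {x : N ⋊[φ] G} : x ∈ (inr : G →* N ⋊[φ] G).range ↔ x.left = 1 := by
  constructor
  · rintro ⟨g, rfl⟩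
    rfl
  · intro h
    exact ⟨x.right, by ext <;> simp [h]⟩

end SemidirectProduct

namespace Z16

theorem dvd_of_intCast_eq_mul_s18 {d m : ℤ} (hd : IsCoprime d 6) {r : ℚ} (hr : r ∈ Z16)
    (h : (m : ℚ) = d * r) : d ∣ m := by
  obtain ⟨m', n, rfl⟩ := hr
  have hq : (m : ℚ) * 6 ^ n = d * m' := by rw [h]; field_simp
  have hz : m * 6 ^ n = d * m' := by exact_mod_cast hq
  exact hd.pow_right.dvd_of_dvd_mul_right ⟨m', hz⟩

theorem eq_zero_of_forall_mem_pow_mul {p : ℤ} (hp : IsCoprime p 6) (hp1 : 1 < p.natAbs)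
    {x : ℚ} (hx : x ∈ Z16) (h : ∀ k : ℕ, ∃ r ∈ Z16, x = p ^ k * r) : x = 0 := by
  obtain ⟨m, n, rfl⟩ := hx
  have hdvd (k : ℕ) : p ^ k ∣ m := by
    obtain ⟨r, hr, e⟩ := h k
    refine dvd_of_intCast_eq_mul_s18 hp.pow_left (nsmul_mem hr (6 ^ n)) ?_
    rw [nsmul_eq_mul, mul_left_comm]
    push_cast
    rw [← e]
    field_simp
  have hm : m = 0 := Int.eq_zero_of_dvd_of_natAbs_lt_natAbs (hdvd m.natAbs)
    (by rw [Int.natAbs_pow]; exact Nat.lt_pow_self hp1)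
  simp [hm]

end Z16

open SemidirectProduct

theorem neg_five_dvd_of_Qa_zpow_mem_range {i : ℤ}
    (h : Qa ^ i ∈ (zpowLeft (-5) : Q23 →* Q23).range) : -5 ∣ i := by
  obtain ⟨y, hy⟩ := h
  have hleft := congrArg (fun x : Q23 => ((toAdd x.left : Z16) : ℚ)) hy
  simp only [zpowLeft_left, Qa, ← map_zpow, left_inl, toAdd_zpow, AddSubgroup.coe_zsmul,
    zsmul_eq_mul] at hleft
  exact Z16.dvd_of_intCast_eq_mul_s18 (by norm_num) (toAdd y.left).2 (by simpa using hleft.symm)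

theorem Qt_zpow (m : ℤ) : Qt ^ m = inr (ofAdd m) := by
  rw [Qt, ← map_zpow, ← Int.ofAdd_mul, one_mul]

theorem mem_range_inr_of_forall_mem_range_iterHom {x : Q23}
    (h : ∀ k, x ∈ (iterHom (zpowLeft (-5) : Q23 →* Q23) k).range) : x ∈ (inr : _ →* Q23).range := by
  rw [mem_range_inr_iff, ← toAdd_eq_zero, ← ZeroMemClass.coe_eq_zero]
  refine Z16.eq_zero_of_forall_mem_pow_mul (p := -5) (by norm_num) (by norm_num) (toAdd x.left).2
    fun k => ?_
  obtain ⟨y, hy⟩ := h k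
  refine ⟨_, (toAdd y.left).2, ?_⟩
  rw [← hy, coe_iterHom, iterate_zpowLeft_left]
  simp

theorem Qa_mul_Qt_mul_Qa_inv_notMem_range_inr : Qa * Qt * Qa⁻¹ ∉ (inr : _ →* Q23).range := by
  have e : (Qa * Qt * Qa⁻¹).left = Qa.left * phiQ (ofAdd 1) Qa.left⁻¹ := by
    simp [Qa, Qt, mul_left, inv_left]
  have hphi : phiQ (ofAdd 1) = AddEquiv.toMultiplicative mul32 := by simp [phiQ]
  rw [mem_range_inr_iff, e, hphi]
  intro h
  have := congrArg (fun x : Multiplicative Z16 => ((toAdd x : Z16) : ℚ)) h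
  change (1 : ℚ) + 3 / 2 * (-1) = 0 at this
  norm_num at this

theorem BSt_mul_BSa_zpow_mul_BSt_inv (n : ℤ) : BSt * BSa ^ (2 * n) * BSt⁻¹ = BSa ^ (3 * n) := by
  have hrel : BSt * BSa ^ 2 * BSt⁻¹ = BSa ^ 3 :=
    mul_inv_eq_one.mp (PresentedGroup.one_of_mem (Set.mem_singleton _))
  rw [zpow_mul, zpow_mul, ← conj_zpow]
  exact_mod_cast congrArg (· ^ n) hrel

/-- The relation moves powers of `a` across `t` as `a^{9i} t = t a^{6i}` and across `t⁻¹` as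
`a^{4i} t⁻¹ = t⁻¹ a^{6i}`. -/
theorem exists_zpow_mul_mem (H : Subgroup BS23) (ha : BSa ^ (5 : ℤ) ∈ H) (ht : BSt ∈ H)
    (g : BS23) : ∃ i : ℤ, BSa ^ i * g ∈ H := by
  have ha5 (i : ℤ) : BSa ^ (5 * i) ∈ H := by rw [zpow_mul]; exact zpow_mem ha i
  have hg : g ∈ Subgroup.closure {BSa, BSt} := by
    refine PresentedGroup.generated_by _ _ (fun j => ?_) g
    fin_cases j
    exacts [Subgroup.subset_closure (Or.inl rfl), Subgroup.subset_closure (Or.inr rfl)]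
  induction hg using Subgroup.closure_induction_left with
  | one => exact ⟨0, by simp⟩
  | mul_left x hx y _ ih =>
    obtain ⟨i, hi⟩ := ih
    rcases hx with rfl | rfl
    · exact ⟨i - 1, by rwa [zpow_sub_one, mul_assoc, inv_mul_cancel_left]⟩
    · refine ⟨9 * i, ?_⟩
      have e : BSa ^ (9 * i) * (BSt * y) = BSt * BSa ^ (5 * i) * (BSa ^ i * y) := by
        rw [show 9 * i = 3 * (3 * i) by ring, ← BSt_mul_BSa_zpow_mul_BSt_inv,
          show 2 * (3 * i) = 5 * i + i by ring, zpow_add]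
        group
      rw [e]
      exact mul_mem (mul_mem ht (ha5 i)) hi
  | inv_mul_cancel x hx y _ ih =>
    obtain ⟨i, hi⟩ := ih
    rcases hx with rfl | rfl
    · exact ⟨i + 1, by rwa [zpow_add_one, mul_assoc, mul_inv_cancel_left]⟩
    · refine ⟨4 * i, ?_⟩
      have e : BSa ^ (4 * i) * (BSt⁻¹ * y) = BSt⁻¹ * BSa ^ (5 * i) * (BSa ^ i * y) := by
        rw [show 5 * i = 3 * (2 * i) - i by ring, zpow_sub, ← BSt_mul_BSa_zpow_mul_BSt_inv,
          show 2 * (2 * i) = 4 * i by ring]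
        group
      rw [e]
      exact mul_mem (mul_mem (inv_mem ht) (ha5 i)) hi

theorem semiconj_zpowLeft_neg_five {θ : BS23 →* BS23} (hθa : θ BSa = BSa ^ (-5 : ℤ))
    (hθt : θ BSt = BSt) {φ : BS23 →* Q23} (hφa : φ BSa = Qa) (hφt : φ BSt = Qt) :
    Semiconj φ θ (zpowLeft (-5) : Q23 →* Q23) := by
  suffices φ.comp θ = (zpowLeft (-5)).comp φ from fun x => DFunLike.congr_fun this x
  refine PresentedGroup.ext fun i => ?_
  fin_cases i
  · change φ (θ BSa) = zpowLeft (-5) (φ BSa)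
    rw [hθa, map_zpow, hφa, Qa, zpowLeft_inl]
  · change φ (θ BSt) = zpowLeft (-5) (φ BSt)
    rw [hθt, hφt, Qt, zpowLeft_inr]

theorem ker_le_range_of_generators {θ : BS23 →* BS23} (hθa : θ BSa = BSa ^ (-5 : ℤ))
    (hθt : θ BSt = BSt) {φ : BS23 →* Q23} (hφa : φ BSa = Qa)
    (hcomm : Semiconj φ θ (zpowLeft (-5) : Q23 →* Q23)) : φ.ker ≤ θ.range := by
  intro g hg
  have ha5 : BSa ^ (5 : ℤ) ∈ θ.range := ⟨BSa⁻¹, by rw [map_inv, hθa, ← zpow_neg, neg_neg]⟩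
  obtain ⟨i, y, hy⟩ := exists_zpow_mul_mem θ.range ha5 ⟨BSt, hθt⟩ g
  obtain ⟨j, rfl⟩ : -5 ∣ i := neg_five_dvd_of_Qa_zpow_mem_range
    ⟨φ y, by rw [← hcomm.eq, hy, map_mul, hg, mul_one, map_zpow, hφa]⟩
  have hai : BSa ^ (-5 * j) ∈ θ.range := ⟨BSa ^ j, by rw [map_zpow, hθa, zpow_mul]⟩
  simpa using mul_mem (inv_mem hai) ⟨y, hy⟩

/-- **Proposition.** With `θ` and `φ` as before, `⋂_{k≥1} im θᵏ = φ⁻¹(0 ⋊ ℤ)`, and this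
subgroup is not normal in `BS(2,3)`. -/
theorem BS23_intersection_iterates_eq_comap_not_normal
    (θ : BS23 →* BS23) (hθa : θ BSa = BSa ^ (-5 : ℤ)) (hθt : θ BSt = BSt)
    (φ : BS23 →* Q23) (hφa : φ BSa = Qa) (hφt : φ BSt = Qt) :
    (⨅ k : ℕ, (iterHom θ (k + 1)).range) =
        Subgroup.comap φ (SemidirectProduct.inr : Multiplicative ℤ →* Q23).range ∧
      ¬ (⨅ k : ℕ, (iterHom θ (k + 1)).range).Normal := by
  have hcomm := semiconj_zpowLeft_neg_five hθa hθt hφa hφt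
  have hker := ker_le_range_iterHom (zpowLeft_injective (zpow_left_injective (by norm_num))) hcomm
    (ker_le_range_of_generators hθa hθt hφa hcomm)
  have hBSt (k : ℕ) : BSt ∈ (iterHom θ k).range :=
    ⟨BSt, by rw [coe_iterHom, iterate_fixed hθt]⟩
  have heq : (⨅ k : ℕ, (iterHom θ (k + 1)).range) = Subgroup.comap φ (inr : _ →* Q23).range := by
    apply le_antisymm
    · intro g hg
      exact mem_range_inr_of_forall_mem_range_iterHom fun k =>
        range_iterHom_succ_le _ _ (map_mem_range_iterHom hcomm (Subgroup.mem_iInf.1 hg k))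
    · rintro g ⟨w, hw⟩
      refine Subgroup.mem_iInf.2 fun k => ?_
      have hg : g * (BSt ^ toAdd w)⁻¹ ∈ φ.ker := by
        rw [MonoidHom.mem_ker, map_mul, map_inv, map_zpow, hφt, Qt_zpow, ofAdd_toAdd, hw,
          mul_inv_cancel]
      simpa using mul_mem (hker (k + 1) hg) (zpow_mem (hBSt (k + 1)) (toAdd w))
  refine ⟨heq, fun hN => Qa_mul_Qt_mul_Qa_inv_notMem_range_inr ?_⟩
  have ht : BSt ∈ ⨅ k : ℕ, (iterHom θ (k + 1)).range := Subgroup.mem_iInf.2 fun k => hBSt (k + 1)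
  have hconj := heq ▸ hN.conj_mem _ ht BSa
  simpa [hφa, hφt] using hconj
end
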